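/- arXiv:0907.5120 — 5 statements merged into one kernel-verified Lean document; each statement's English description precedes it below -/
import Mathlib

section
/- Let p and q be distinct primes. There is no unary P system Π' = ({a}, h'_1, ..., h'_k, w') with multiplier constants c'_i ≥ 2 such that {p · q^m : m ≥ 0} = {c'_1^{m_1} ⋯ c'_k^{m_k} · |w'| : m_i ≥ 1 for all i}. Equivalently: the set L = {p·q^m : m ≥ 0} is not of the form {c_1^{m_1}⋯c_k^{m_k}·w : m_i ≥ 1} for any choice of k ≥ 1, w ≥ 1, and c_i ≥ 2. -/
/-- The L_*-language {p·q^m : m ≥ 0} (p, q distinct primes) is not the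
L_+-language of any unary P system with all multipliers ≥ 2. -/
theorem stmt_2 (p q : ℕ) (hp : p.Prime) (hq : q.Prime) (hpq : p ≠ q) :
    ¬ ∃ (k : ℕ) (w : ℕ) (c : Fin k → ℕ), 1 ≤ k ∧ 1 ≤ w ∧ (∀ i, 2 ≤ c i) ∧
      {x : ℕ | ∃ m : ℕ, x = p * q ^ m} =
      {x : ℕ | ∃ m : Fin k → ℕ, (∀ i, 1 ≤ m i) ∧ x = (∏ i, c i ^ m i) * w} := by
  rintro ⟨k, w, c, hk, hw, hc, hEq⟩
  have hp1 : p ∈ {x : ℕ | ∃ m : ℕ, x = p * q ^ m} := ⟨0, by simp⟩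
  rw [hEq] at hp1
  obtain ⟨m, hm, hpm⟩ := hp1
  set P := ∏ i, c i ^ m i with hP
  have hPpos : 0 < P :=
    Finset.prod_pos (fun i _ => pow_pos (by linarith [hc i]) _)
  have i0 : Fin k := ⟨0, hk⟩
  have h2P : 2 ≤ P := by
    have hd := Finset.dvd_prod_of_mem (fun i => c i ^ m i) (Finset.mem_univ i0)
    have h2 : 2 ≤ c i0 ^ m i0 :=
      le_trans (hc i0) (Nat.le_self_pow (Nat.one_le_iff_ne_zero.mp (hm i0)) _)
    exact le_trans h2 (Nat.le_of_dvd hPpos hd)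
  have hwdvd : w ∣ p := ⟨P, by rw [hpm]; ring⟩
  have hw1 : w = 1 := by
    rcases hp.eq_one_or_self_of_dvd w hwdvd with h | h
    · exact h
    · subst h; nlinarith [hpm]
  have hPp : P = p := by rw [hw1, mul_one] at hpm; exact hpm.symm
  have hsq : p * p ∈ {x : ℕ | ∃ m : Fin k → ℕ, (∀ i, 1 ≤ m i) ∧ x = (∏ i, c i ^ m i) * w} := by
    refine ⟨fun i => 2 * m i, fun i => le_trans (hm i) (Nat.le_mul_of_pos_left (m i) (by norm_num)), ?_⟩
    rw [hw1, mul_one]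
    have hpr : ∏ i, c i ^ (2 * m i) = P * P := by
      rw [hP, ← Finset.prod_mul_distrib]
      exact Finset.prod_congr rfl (fun i _ => by rw [← pow_add]; ring_nf)
    rw [hpr, hPp]
  rw [← hEq] at hsq
  obtain ⟨n, hn⟩ := hsq
  have hpqn : p = q ^ n := Nat.eq_of_mul_eq_mul_left hp.pos hn
  cases n with
  | zero => simp at hpqn; exact hp.one_lt.ne' hpqn
  | succ n =>
    have hdq : q ∣ p := hpqn ▸ dvd_pow_self q (Nat.succ_ne_zero n)
    exact hpq ((Nat.prime_dvd_prime_iff_eq hq hp).mp hdq).symm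
end

section
/- Let p_1, ..., p_n be the first n primes and L(n) = {p_1^{m_1}⋯p_n^{m_n} : m_i ≥ 0}. Then L(n) cannot be written as {c_1^{k_1}⋯c_r^{k_r}·w : k_i ≥ 0} for any r < n, any w ≥ 1, and any c_1, ..., c_r ≥ 1. -/
/-- If a product of powers equals a prime, one of the bases equals the prime. -/
lemma aux_prime_factor {r : ℕ} (c : Fin r → ℕ) (k : Fin r → ℕ) {q : ℕ}
    (hq : q.Prime) (h : ∏ i, c i ^ k i = q) : ∃ i, c i = q := by
  by_contra hall
  push_neg at hall
  have hone : ∀ i : Fin r, c i ^ k i = 1 := by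
    intro i
    have hdvd : c i ^ k i ∣ q := h ▸ Finset.dvd_prod_of_mem _ (Finset.mem_univ i)
    rcases (Nat.dvd_prime hq).mp hdvd with h1 | h1
    · exact h1
    · exfalso
      have hk : k i ≠ 0 := by
        intro hk0
        rw [hk0, pow_zero] at h1
        exact hq.one_lt.ne h1
      have hcd : c i ∣ q := h1 ▸ dvd_pow_self (c i) hk
      rcases (Nat.dvd_prime hq).mp hcd with h2 | h2
      · rw [h2, one_pow] at h1; exact hq.one_lt.ne h1
      · exact hall i h2
  rw [Finset.prod_eq_one (fun i _ => hone i)] at h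
  exact hq.one_lt.ne h

/-- L(n) cannot be generated by a unary P system with fewer than n homomorphisms. -/
theorem stmt_4 (n r : ℕ) (hr : r < n) (w : ℕ) (hw : 1 ≤ w)
    (c : Fin r → ℕ) (hc : ∀ i, 1 ≤ c i) :
    {x : ℕ | ∃ m : Fin n → ℕ, x = ∏ i : Fin n, (Nat.nth Nat.Prime i) ^ m i} ≠
    {x : ℕ | ∃ k : Fin r → ℕ, x = (∏ i, c i ^ k i) * w} := by
  intro h
  -- 1 is in the left set, hence w = 1
  have h1 : (1:ℕ) ∈ {x : ℕ | ∃ m : Fin n → ℕ, x = ∏ i : Fin n, (Nat.nth Nat.Prime i) ^ m i} :=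
    ⟨0, by simp⟩
  rw [h] at h1
  obtain ⟨k0, hk0⟩ := h1
  have hw1 : w = 1 := (Nat.eq_one_of_mul_eq_one_left hk0.symm)
  -- each prime is in the left set
  have hmem : ∀ j : Fin n, ∃ i : Fin r, c i = Nat.nth Nat.Prime j := by
    intro j
    have hpj : (Nat.nth Nat.Prime (j:ℕ)) ∈
        {x : ℕ | ∃ m : Fin n → ℕ, x = ∏ i : Fin n, (Nat.nth Nat.Prime i) ^ m i} := by
      refine ⟨fun i => if i = j then 1 else 0, ?_⟩
      rw [Finset.prod_eq_single j]
      · simp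
      · intro b _ hb; simp [hb]
      · simp
    rw [h] at hpj
    obtain ⟨k, hk⟩ := hpj
    rw [hw1, mul_one] at hk
    exact aux_prime_factor c k (Nat.prime_nth_prime j) hk.symm
  -- build an injection Fin n ↪ Fin r
  choose f hf using hmem
  have hinj : Function.Injective f := by
    intro j1 j2 hj
    have : Nat.nth Nat.Prime (j1:ℕ) = Nat.nth Nat.Prime (j2:ℕ) := by
      rw [← hf j1, ← hf j2, hj]
    have := Nat.nth_injective Nat.infinite_setOf_prime this
    exact Fin.ext this
  have := Fintype.card_le_of_injective f hinj
  simp at this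
  omega
end

section
/- Let m ≥ 2 and consider Π with two homomorphisms h_1(a) = h_2(a) = a^m and axiom a^m, so L_+(Π) = {m^{k} : k ≥ 3} ∪ {m^{1+i+j} : i,j ≥ 1} = {m^k : k ≥ 3}. Then: (1) L_+(Π) = {m^k : k ≥ 3}; (2) the unique single-homomorphism unary P system Π' = ({a}, h, a^{w'}) with L_+(Π') = {m^k : k ≥ 3} has h(a) = a^m and w' = m^2, hence size |Π'| = m + m^2 while |Π| = 3m; so |Π'| ≥ |Π|^2/9. -/
/-!
Both languages are ranges of strictly increasing sequences, `k ↦ c ^ (k + 1) * w'` and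
`k ↦ m ^ (k + 3)` (once `c = 1` is excluded, since then the first range is a singleton), and
two strictly increasing sequences on `ℕ` with the same range coincide. Comparing their first two
terms, `c * w' = m ^ 3` and `c ^ 2 * w' = m ^ 4`, gives `c = m` and then `w' = m ^ 2`.
-/

theorem setOf_exists_le_eq_range {α : Type*} (f : ℕ → α) (n : ℕ) :
    {x | ∃ k, n ≤ k ∧ x = f k} = Set.range (fun k => f (k + n)) := by
  ext x
  constructor
  · rintro ⟨k, hk, rfl⟩
    exact ⟨k - n, congrArg f (Nat.sub_add_cancel hk)⟩
  · rintro ⟨k, rfl⟩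
    exact ⟨k + n, Nat.le_add_left n k, rfl⟩

theorem setOf_exists_one_add_add_eq {α : Type*} (f : ℕ → α) :
    {x | ∃ i j : ℕ, 1 ≤ i ∧ 1 ≤ j ∧ x = f (1 + i + j)} = {x | ∃ k, 3 ≤ k ∧ x = f k} := by
  ext x
  constructor
  · rintro ⟨i, j, hi, hj, rfl⟩
    exact ⟨1 + i + j, by omega, rfl⟩
  · rintro ⟨k, hk, rfl⟩
    exact ⟨1, k - 2, le_rfl, by omega, by rw [show 1 + 1 + (k - 2) = k by omega]⟩

theorem eq_and_eq_sq_of_range_pow_mul_eq {m c w : ℕ} (hm : 2 ≤ m) (hc : 1 ≤ c) (hw : 1 ≤ w)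
    (h : Set.range (fun k => c ^ (k + 1) * w) = Set.range (fun k => m ^ (k + 3))) :
    c = m ∧ w = m ^ 2 := by
  have hm_mono : StrictMono (fun k => m ^ k) := pow_right_strictMono₀ hm
  have hc2 : 2 ≤ c := by
    by_contra! hc2
    obtain rfl : c = 1 := by omega
    have hsingleton : Set.range (fun k => m ^ (k + 3)) = {w} := by
      simp only [← h, one_pow, one_mul, Set.range_const]
    have h3 : m ^ 3 = w := hsingleton.subset ⟨0, rfl⟩
    have h4 : m ^ 4 = w := hsingleton.subset ⟨1, rfl⟩
    exact (hm_mono (by norm_num : 3 < 4)).ne (h3.trans h4.symm)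
  have hc_mono : StrictMono (fun k => c ^ (k + 1) * w) :=
    (strictMono_mul_right_of_pos hw).comp ((pow_right_strictMono₀ hc2).comp add_left_strictMono)
  have hseq := (hc_mono.range_inj (hm_mono.comp add_left_strictMono)).mp h
  have h3 : c * w = m ^ 3 := by simpa using congrFun hseq 0
  have h4 : c ^ 2 * w = m ^ 4 := congrFun hseq 1
  have hcm : c = m := by
    have : c * m ^ 3 = m * m ^ 3 :=
      calc c * m ^ 3 = c ^ 2 * w := by rw [← h3]; ring
        _ = m * m ^ 3 := by rw [h4]; ring
    exact Nat.eq_of_mul_eq_mul_right (by positivity) this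
  subst hcm
  refine ⟨rfl, Nat.eq_of_mul_eq_mul_left (by omega : 0 < c) ?_⟩
  rw [h3, ← pow_succ']

/-- Quadratic lower bound witness: for Π with c₁ = c₂ = w = m (m ≥ 2),
L_+(Π) = {m^k : k ≥ 3}, and any equivalent one-homomorphism system must have
multiplier m and axiom m², hence size m + m² ≥ |Π|²/9 with |Π| = 3m. -/
theorem stmt_12 (m : ℕ) (hm : 2 ≤ m) :
    ({x : ℕ | ∃ i j : ℕ, 1 ≤ i ∧ 1 ≤ j ∧ x = m ^ (1 + i + j)} =
     {x : ℕ | ∃ k : ℕ, 3 ≤ k ∧ x = m ^ k}) ∧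
    (∀ c w' : ℕ, 1 ≤ c → 1 ≤ w' →
      {x : ℕ | ∃ k : ℕ, 1 ≤ k ∧ x = c ^ k * w'} =
        {x : ℕ | ∃ k : ℕ, 3 ≤ k ∧ x = m ^ k} →
      c = m ∧ w' = m ^ 2 ∧ c + w' = m + m ^ 2 ∧ (3 * m) ^ 2 ≤ 9 * (c + w')) := by
  refine ⟨setOf_exists_one_add_add_eq (m ^ ·), fun c w' hc hw' hL => ?_⟩
  rw [setOf_exists_le_eq_range (fun k => c ^ k * w'),
    setOf_exists_le_eq_range (m ^ ·)] at hL
  obtain ⟨rfl, rfl⟩ := eq_and_eq_sq_of_range_pow_mul_eq hm hc hw' hL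
  exact ⟨rfl, rfl, rfl, by nlinarith⟩
end

section
/- Let m ≥ 2 and n ≥ 2. Then {m^{1 + m_1 + ... + m_n} : m_i ≥ 1 for all i} = {m^k : k ≥ n+1}. Furthermore, if {c^{k} · w' : k ≥ 1} = {m^k : k ≥ n+1} with c ≥ 2, then c = m and w' = m^n, so the size c + w' = m + m^n. -/
/-- Generalized lower bound: {m^{1+Σk_i} : k_i ≥ 1} = {m^k : k ≥ n+1}, and any
one-homomorphism representation {c^k·w : k ≥ 1} of {m^k : k ≥ n+1} with c ≥ 2
forces c = m and w = m^n (hence size m + m^n). -/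
theorem stmt_13 (m n : ℕ) (hm : 2 ≤ m) (hn : 2 ≤ n) :
    ({x : ℕ | ∃ k : Fin n → ℕ, (∀ i, 1 ≤ k i) ∧ x = m ^ (1 + ∑ i, k i)} =
     {x : ℕ | ∃ j : ℕ, n + 1 ≤ j ∧ x = m ^ j}) ∧
    (∀ c w : ℕ, 2 ≤ c → 1 ≤ w →
      {x : ℕ | ∃ k : ℕ, 1 ≤ k ∧ x = c ^ k * w} =
        {x : ℕ | ∃ j : ℕ, n + 1 ≤ j ∧ x = m ^ j} →
      c = m ∧ w = m ^ n) := by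
  have hn0 : 0 < n := by omega
  haveI : NeZero n := ⟨by omega⟩
  constructor
  · ext x
    simp only [Set.mem_setOf_eq]
    constructor
    · rintro ⟨k, hk, rfl⟩
      refine ⟨1 + ∑ i, k i, ?_, rfl⟩
      have : n ≤ ∑ i, k i := by
        calc n = ∑ _i : Fin n, 1 := by simp
        _ ≤ ∑ i, k i := Finset.sum_le_sum fun i _ => hk i
      omega
    · rintro ⟨j, hj, rfl⟩
      refine ⟨fun i => 1 + (if i = 0 then j - (n + 1) else 0), fun i => Nat.le_add_right 1 _, ?_⟩
      have hsum : ∑ i : Fin n, (1 + (if i = 0 then j - (n + 1) else 0))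
          = n + (j - (n + 1)) := by
        rw [Finset.sum_add_distrib, Finset.sum_ite_eq' Finset.univ (0 : Fin n)]
        simp
      rw [hsum]
      congr 1
      omega
  · intro c w hc hw hset
    have hcw : c * w ∈ {x : ℕ | ∃ j : ℕ, n + 1 ≤ j ∧ x = m ^ j} := by
      rw [← hset]; exact ⟨1, le_refl 1, by ring⟩
    have hc2w : c ^ 2 * w ∈ {x : ℕ | ∃ j : ℕ, n + 1 ≤ j ∧ x = m ^ j} := by
      rw [← hset]; exact ⟨2, by norm_num, rfl⟩
    have hm1 : m ^ (n + 1) ∈ {x : ℕ | ∃ k : ℕ, 1 ≤ k ∧ x = c ^ k * w} := by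
      rw [hset]; exact ⟨n + 1, le_refl _, rfl⟩
    have hm2 : m ^ (n + 2) ∈ {x : ℕ | ∃ k : ℕ, 1 ≤ k ∧ x = c ^ k * w} := by
      rw [hset]; exact ⟨n + 2, by omega, rfl⟩
    obtain ⟨j1, hj1, hj1e⟩ := hcw
    obtain ⟨j2, hj2, hj2e⟩ := hc2w
    obtain ⟨k1, hk1, hk1e⟩ := hm1
    obtain ⟨k2, hk2, hk2e⟩ := hm2
    -- c*w = m^(n+1)
    have hcwle : c * w ≤ m ^ (n + 1) := by
      rw [hk1e]
      have : c ^ 1 ≤ c ^ k1 := Nat.pow_le_pow_right (by omega) hk1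
      calc c * w = c ^ 1 * w := by ring
      _ ≤ c ^ k1 * w := Nat.mul_le_mul_right w this
    have hle2 : m ^ (n + 1) ≤ m ^ j1 := Nat.pow_le_pow_right (by omega) hj1
    have heq1 : c * w = m ^ (n + 1) := le_antisymm hcwle (hj1e ▸ hle2)
    -- c^2*w = m^(n+2)
    have hlt : c * w < m ^ (n + 2) := by
      rw [heq1]
      exact Nat.pow_lt_pow_right (by omega) (by omega)
    have hk2' : 2 ≤ k2 := by
      by_contra h
      have : k2 = 1 := by omega
      rw [this, pow_one] at hk2e
      omega
    have hc2wle : c ^ 2 * w ≤ m ^ (n + 2) := by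
      rw [hk2e]
      exact Nat.mul_le_mul_right w (Nat.pow_le_pow_right (by omega) hk2')
    have hj2' : n + 2 ≤ j2 := by
      by_contra h
      have hj2eq : j2 = n + 1 := by omega
      rw [hj2eq, ← heq1] at hj2e
      have : c * w < c ^ 2 * w := by
        have : c ^ 1 < c ^ 2 := Nat.pow_lt_pow_right (by omega) (by omega)
        have := (Nat.mul_lt_mul_right (by omega : 0 < w)).mpr this
        simpa using this
      omega
    have heq2 : c ^ 2 * w = m ^ (n + 2) := by
      have : m ^ (n + 2) ≤ m ^ j2 := Nat.pow_le_pow_right (by omega) hj2'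
      omega
    -- conclude
    have hcw0 : 0 < c * w := Nat.mul_pos (by omega) hw
    have hcm : c = m := by
      have h : c * (c * w) = m * (c * w) := by
        rw [heq1]
        calc c * m ^ (n + 1) = c ^ 2 * w := by rw [← heq1]; ring
        _ = m ^ (n + 2) := heq2
        _ = m * m ^ (n + 1) := by ring
      exact Nat.eq_of_mul_eq_mul_right hcw0 (by linarith [h] )
    subst hcm
    refine ⟨rfl, ?_⟩
    have : c * w = c * c ^ n := by rw [heq1, pow_succ]; ring
    exact Nat.eq_of_mul_eq_mul_left (by omega) this
end

section
/- Let Π have homomorphism multipliers c_1, ..., c_n whose exponent vectors are distinct irreducible elements of the monoid S = M_Π(ℕ^n) ⊆ ℕ^k, with translation vector b. Then for any unary P system Π' = ({a}, h'_1,...,h'_{n'}, a^{w'}) with multipliers c'_i generating the same L_*-language, we have n' ≥ n, and the multiset {c_1, ..., c_n} is a sub(multi)set of {c'_1, ..., c'_{n'}}; consequently |Π'| = w' + Σ c'_i ≥ w + Σ c_i = |Π|. -/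
/-!
Both languages have the same least element, so `w = w'`, and then each `c i` is a product of
the `c' j` and vice versa. Passing to exponent vectors, every `(c' j).factorization` lies in `S`,
so `(c i).factorization` is a sum of elements of `S` drawn from the `(c' j).factorization`;
being irreducible in `S`, it must equal one of them. Distinct `c i` thus occur as distinct
`c' j`, which gives the counting and the size bound.
-/

/-- The `L_*`-language of the unary P system with axiom `a^w` and homomorphism multipliers `c i`,
recorded by word lengths. -/
def unaryLanguage {ι : Type*} [Fintype ι] (c : ι → ℕ) (w : ℕ) : Set ℕ :=
  {x | ∃ m : ι → ℕ, x = (∏ i, c i ^ m i) * w}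

section unaryLanguage

variable {ι ι' : Type*} [Fintype ι] [Fintype ι']

lemma self_mem_unaryLanguage (c : ι → ℕ) (w : ℕ) : w ∈ unaryLanguage c w :=
  ⟨0, by simp⟩

lemma mul_mem_unaryLanguage [DecidableEq ι] (c : ι → ℕ) (w : ℕ) (i : ι) :
    c i * w ∈ unaryLanguage c w :=
  ⟨Pi.single i 1, by simp [Pi.single_apply, pow_ite]⟩

lemma dvd_of_mem_unaryLanguage {c : ι → ℕ} {w x : ℕ} (hx : x ∈ unaryLanguage c w) : w ∣ x := by
  obtain ⟨m, rfl⟩ := hx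
  exact dvd_mul_left w _

lemma eq_of_unaryLanguage_eq {c : ι → ℕ} {c' : ι' → ℕ} {w w' : ℕ}
    (h : unaryLanguage c w = unaryLanguage c' w') : w = w' :=
  Nat.dvd_antisymm (dvd_of_mem_unaryLanguage (h ▸ self_mem_unaryLanguage c' w'))
    (dvd_of_mem_unaryLanguage (h ▸ self_mem_unaryLanguage c w))

lemma exists_eq_prod_pow_of_unaryLanguage_eq [DecidableEq ι] {c : ι → ℕ} {c' : ι' → ℕ} {w : ℕ}
    (hw : w ≠ 0) (h : unaryLanguage c w = unaryLanguage c' w) (i : ι) :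
    ∃ m : ι' → ℕ, c i = ∏ j, c' j ^ m j := by
  obtain ⟨m, hm⟩ : c i * w ∈ unaryLanguage c' w := h ▸ mul_mem_unaryLanguage c w i
  exact ⟨m, Nat.eq_of_mul_eq_mul_right (Nat.pos_of_ne_zero hw) hm⟩

end unaryLanguage

lemma Nat.factorization_prod_pow_mem_closure {ι : Type*} (s : Finset ι) {b : ι → ℕ}
    (hb : ∀ i, b i ≠ 0) (m : ι → ℕ) :
    (∏ i ∈ s, b i ^ m i).factorization ∈
      AddSubmonoid.closure (Set.range fun i => (b i).factorization) := by
  rw [Nat.factorization_prod fun i _ => pow_ne_zero _ (hb i)]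
  refine AddSubmonoid.sum_mem _ fun i _ => ?_
  rw [Nat.factorization_pow]
  exact AddSubmonoid.nsmul_mem _ (AddSubmonoid.subset_closure (Set.mem_range_self i)) _

lemma AddSubmonoid.mem_of_mem_closure_of_irreducible {M : Type*} [AddMonoid M]
    {S : AddSubmonoid M} {T : Set M} {x : M} (hx : x ≠ 0)
    (hirr : ¬ ∃ x₁ x₂, x₁ ∈ S ∧ x₂ ∈ S ∧ x₁ ≠ 0 ∧ x₂ ≠ 0 ∧ x = x₁ + x₂)
    (hTS : T ⊆ S) (hxT : x ∈ AddSubmonoid.closure T) : x ∈ T := by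
  have hclS : AddSubmonoid.closure T ≤ S := AddSubmonoid.closure_le.mpr hTS
  suffices h : ∀ y ∈ AddSubmonoid.closure T, y = x → x ∈ T from h x hxT rfl
  intro y hy
  induction hy using AddSubmonoid.closure_induction with
  | mem y hy => rintro rfl; exact hy
  | zero => rintro rfl; exact absurd rfl hx
  | add y z hy hz ihy ihz =>
    intro hyz
    by_cases hy0 : y = 0
    · exact ihz (by rwa [hy0, zero_add] at hyz)
    by_cases hz0 : z = 0
    · exact ihy (by rwa [hz0, add_zero] at hyz)
    exact absurd ⟨y, z, hclS hy, hclS hz, hy0, hz0, hyz.symm⟩ hirr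

theorem stmt_17_general (n n' : ℕ) (c : Fin n → ℕ) (hc : ∀ i, 2 ≤ c i)
    (c' : Fin n' → ℕ) (hc' : ∀ i, 1 ≤ c' i) (w w' : ℕ) (hw : 1 ≤ w)
    (S : AddSubmonoid (ℕ →₀ ℕ))
    (hSdef : S = AddSubmonoid.closure (Set.range fun i => (c i).factorization))
    (hdistinct : Function.Injective fun i => (c i).factorization)
    (hirr : ∀ i : Fin n, ¬ ∃ x₁ x₂, x₁ ∈ S ∧ x₂ ∈ S ∧ x₁ ≠ 0 ∧ x₂ ≠ 0 ∧
      (c i).factorization = x₁ + x₂)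
    (hlang : {x : ℕ | ∃ m : Fin n → ℕ, x = (∏ i, c i ^ m i) * w} =
             {x : ℕ | ∃ m : Fin n' → ℕ, x = (∏ i, c' i ^ m i) * w'}) :
    n ≤ n' ∧ (∃ f : Fin n → Fin n', Function.Injective f ∧ ∀ i, c' (f i) = c i) ∧
    w + ∑ i, c i ≤ w' + ∑ i, c' i := by
  have hL : unaryLanguage c w = unaryLanguage c' w' := hlang
  obtain rfl : w = w' := eq_of_unaryLanguage_eq hL
  have hw0 : w ≠ 0 := Nat.one_le_iff_ne_zero.mp hw
  have hc0 : ∀ i, c i ≠ 0 := fun i => by linarith [hc i]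
  have hc'0 : ∀ j, c' j ≠ 0 := fun j => by linarith [hc' j]
  have hc'S : Set.range (fun j => (c' j).factorization) ⊆ S := by
    rintro _ ⟨j, rfl⟩
    obtain ⟨m, hm⟩ := exists_eq_prod_pow_of_unaryLanguage_eq hw0 hL.symm j
    rw [hSdef]
    change (c' j).factorization ∈ _
    rw [hm]
    exact Nat.factorization_prod_pow_mem_closure _ hc0 m
  have hcc' : ∀ i, ∃ j, c' j = c i := fun i => by
    obtain ⟨m, hm⟩ := exists_eq_prod_pow_of_unaryLanguage_eq hw0 hL i
    have hfac : (c i).factorization ≠ 0 := by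
      simpa [Nat.factorization_eq_zero_iff'] using ⟨hc0 i, by linarith [hc i]⟩
    obtain ⟨j, hj⟩ := AddSubmonoid.mem_of_mem_closure_of_irreducible hfac (hirr i) hc'S
      (hm ▸ Nat.factorization_prod_pow_mem_closure _ hc'0 m)
    exact ⟨j, Nat.factorization_inj (hc'0 j) (hc0 i) hj⟩
  choose f hf using hcc'
  have hf_inj : Function.Injective f := fun i₁ i₂ h => hdistinct (by simp only [← hf, h])
  refine ⟨Fin.le_of_injective f hf_inj, ⟨f, hf_inj, hf⟩, Nat.add_le_add_left ?_ w⟩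
  calc ∑ i, c i = ∑ j ∈ Finset.univ.map ⟨f, hf_inj⟩, c' j := by simp [hf]
    _ ≤ ∑ j, c' j := Finset.sum_le_sum_of_subset (Finset.subset_univ _)

/-- Theorem 2: if the exponent vectors of the multipliers c_i of Π are distinct
irreducible elements of the associated monoid S, then any unary P system Π'
generating the same L_*-language has at least as many homomorphisms, contains
all the c_i among its multipliers, and has size at least |Π| = w + Σ c_i. -/
theorem stmt_17 (n n' : ℕ) (c : Fin n → ℕ) (hc : ∀ i, 2 ≤ c i)
    (c' : Fin n' → ℕ) (hc' : ∀ i, 1 ≤ c' i) (w w' : ℕ) (hw : 1 ≤ w) (hw' : 1 ≤ w')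
    (S : AddSubmonoid (ℕ →₀ ℕ))
    (hSdef : S = AddSubmonoid.closure (Set.range fun i => (c i).factorization))
    (hdistinct : Function.Injective fun i => (c i).factorization)
    (hirr : ∀ i : Fin n, ¬ ∃ x₁ x₂, x₁ ∈ S ∧ x₂ ∈ S ∧ x₁ ≠ 0 ∧ x₂ ≠ 0 ∧
      (c i).factorization = x₁ + x₂)
    (hlang : {x : ℕ | ∃ m : Fin n → ℕ, x = (∏ i, c i ^ m i) * w} =
             {x : ℕ | ∃ m : Fin n' → ℕ, x = (∏ i, c' i ^ m i) * w'}) :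
    n ≤ n' ∧ (∃ f : Fin n → Fin n', Function.Injective f ∧ ∀ i, c' (f i) = c i) ∧
    w + ∑ i, c i ≤ w' + ∑ i, c' i :=
  stmt_17_general n n' c hc c' hc' w w' hw S hSdef hdistinct hirr hlang
end
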